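/- Let S = {x, y, z, w} ⊂ ℝ² be four points whose convex hull is the triangle xyz, with w in the interior of this triangle. Then w is contained in at least two of the three disks D(x,y), D(y,z), D(x,z). -/

import Mathlib

open Real

/-- The closed disk with diameter segment `ab`. -/
def diskD (a b : EuclideanSpace ℝ (Fin 2)) : Set (EuclideanSpace ℝ (Fin 2)) :=
  Metric.closedBall (midpoint ℝ a b) (dist a b / 2)

/-!
Writing `w` as a combination of `x, y, z` with positive weights, the vectors `x - w, y - w, z - w`
have a positive combination equal to `0`. Pairing this relation with one of the vectors shows that
it has a nonpositive inner product with one of the other two. By Thales, `w ∈ D(a, b)` exactly when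
`⟪a - w, b - w⟫ ≤ 0`, and one such pair at each of the three vertices gives at least two sides.
-/

open Metric Set RealInnerProductSpace

section InnerProductSpace

variable {E : Type*} [NormedAddCommGroup E] [InnerProductSpace ℝ E]

theorem mem_closedBall_midpoint_iff_inner_nonpos (a b w : E) :
    w ∈ closedBall (midpoint ℝ a b) (dist a b / 2) ↔ ⟪a - w, b - w⟫ ≤ 0 := by
  have hsq : dist w (midpoint ℝ a b) ^ 2 = (dist a b / 2) ^ 2 + ⟪a - w, b - w⟫ := by
    have hm : midpoint ℝ a b - w = (2⁻¹ : ℝ) • ((a - w) + (b - w)) := by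
      rw [midpoint_eq_smul_add, invOf_eq_inv]; module
    have hab : a - b = (a - w) - (b - w) := by abel
    rw [dist_comm, dist_eq_norm, dist_eq_norm, hm, hab]
    generalize a - w = p, b - w = q
    rw [norm_smul, mul_pow, div_pow, norm_add_sq_real, norm_sub_sq_real, norm_inv,
      Real.norm_ofNat]
    ring
  rw [mem_closedBall, ← sq_le_sq₀ dist_nonneg (by positivity), hsq]
  constructor <;> intro h <;> linarith

theorem inner_nonpos_or_inner_nonpos_of_smul_add_smul_add_smul_eq_zero {u v t : E} {α β γ : ℝ}
    (hα : 0 ≤ α) (hβ : 0 < β) (hγ : 0 < γ) (h : α • u + β • v + γ • t = 0) :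
    ⟪u, v⟫ ≤ 0 ∨ ⟪u, t⟫ ≤ 0 := by
  have hinner : α * ‖u‖ ^ 2 + β * ⟪u, v⟫ + γ * ⟪u, t⟫ = 0 := by
    simpa [inner_add_right, real_inner_smul_right, real_inner_self_eq_norm_sq] using
      congrArg (⟪u, ·⟫) h
  by_contra! hpos
  nlinarith [mul_pos hβ hpos.1, mul_pos hγ hpos.2, mul_nonneg hα (sq_nonneg ‖u‖)]

end InnerProductSpace

theorem AffineIndependent.exists_pos_weights_of_mem_interior_convexHull
    {ι E : Type*} [Fintype ι] [NormedAddCommGroup E] [InnerProductSpace ℝ E]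
    [FiniteDimensional ℝ E] {p : ι → E} (hp : AffineIndependent ℝ p)
    (hcard : Fintype.card ι = Module.finrank ℝ E + 1) {w : E}
    (hw : w ∈ interior (convexHull ℝ (range p))) :
    ∃ c : ι → ℝ, (∀ i, 0 < c i) ∧ ∑ i, c i = 1 ∧ ∑ i, c i • p i = w := by
  let b : AffineBasis ι ℝ E := ⟨p, hp, hp.affineSpan_eq_top_iff_card_eq_finrank_add_one.2 hcard⟩
  have hsum := b.sum_coord_apply_eq_one w
  have hpos : w ∈ {x | ∀ i, 0 < b.coord i x} := b.interior_convexHull ▸ hw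
  refine ⟨(b.coord · w), hpos, hsum, ?_⟩
  have hcomb := b.affineCombination_coord_eq_self w
  rwa [Finset.affineCombination_eq_linear_combination _ _ _ hsum] at hcomb

/-- A point in the interior of a triangle lies in at least two of the three disks
whose diameters are the sides of the triangle. -/
theorem interior_point_in_two_side_disks
    (x y z w : EuclideanSpace ℝ (Fin 2)) (h : AffineIndependent ℝ ![x, y, z])
    (hw : w ∈ interior (convexHull ℝ ({x, y, z} : Set (EuclideanSpace ℝ (Fin 2))))) :
    (w ∈ diskD x y ∧ w ∈ diskD y z) ∨ (w ∈ diskD y z ∧ w ∈ diskD x z) ∨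
      (w ∈ diskD x y ∧ w ∈ diskD x z) := by
  obtain ⟨c, hc, hsum, hcomb⟩ := h.exists_pos_weights_of_mem_interior_convexHull (by simp)
    (by rwa [Matrix.range_cons, Matrix.range_cons, Matrix.range_cons_empty] : w ∈ _)
  simp only [Fin.sum_univ_three, Matrix.cons_val] at hsum hcomb
  have hzero : c 0 • (x - w) + c 1 • (y - w) + c 2 • (z - w) = 0 := by
    calc _ = (c 0 • x + c 1 • y + c 2 • z) - (c 0 + c 1 + c 2) • w := by module
      _ = 0 := by rw [hcomb, hsum, one_smul, sub_self]
  have hx := inner_nonpos_or_inner_nonpos_of_smul_add_smul_add_smul_eq_zero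
    (hc 0).le (hc 1) (hc 2) hzero
  have hy := inner_nonpos_or_inner_nonpos_of_smul_add_smul_add_smul_eq_zero
    (hc 1).le (hc 0) (hc 2) (by rw [← hzero]; abel)
  have hz := inner_nonpos_or_inner_nonpos_of_smul_add_smul_add_smul_eq_zero
    (hc 2).le (hc 0) (hc 1) (by rw [← hzero]; abel)
  simp only [diskD, mem_closedBall_midpoint_iff_inner_nonpos]
  rw [real_inner_comm (x - w)] at hy
  rw [real_inner_comm (x - w), real_inner_comm (y - w)] at hz
  tauto
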